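/- Let r > 0, 0 < p < 1, and n be a non-negative integer, and let π be the truncated negative binomial probability mass function on {0,1,...,n}. Then for every integer i with 1 ≤ i ≤ n: ( ∑_{j=i+1}^{n} π_j ) / ( p(r+i) ) + ( ∑_{j=0}^{i-1} π_j ) / i ≤ (1 − π_0)/(p·r), where the first sum is interpreted as 0 when i = n. -/

import Mathlib

/-- The negative binomial pmf: `P(Z = k)` for `Z ~ NB(r,p)`. -/
noncomputable def nbPmf (r p : ℝ) (k : ℕ) : ℝ :=
  Real.Gamma (r + k) / (Real.Gamma r * k.factorial) * (1 - p) ^ r * p ^ k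

/-- The truncated negative binomial pmf on `{0,...,n}`:
`π_i = P(Z = i) / P(Z ≤ n)` for `Z ~ NB(r,p)`. -/
noncomputable def truncNbPmf (r p : ℝ) (n i : ℕ) : ℝ :=
  nbPmf r p i / ∑ j ∈ Finset.range (n + 1), nbPmf r p j

/-!
Write `π` for the truncated pmf. The ratio recurrence `(k + 1) π_{k+1} = p (r + k) π_k` gives,
term by term for `j < i`, `p r π_j ≤ p (r + j) π_j = (j + 1) π_{j+1} ≤ i π_{j+1}`, so the head sum
satisfies `(π_0 + ⋯ + π_{i-1}) / i ≤ (π_1 + ⋯ + π_i) / (p r)`. Bounding `1 / (p (r + i))` by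
`1 / (p r)` in the tail term, the left-hand side is at most `(π_1 + ⋯ + π_n) / (p r) = (1 - π_0) / (p r)`.
-/

open Finset

theorem tail_div_add_head_div_le_of_succ_mul_eq {π : ℕ → ℝ} {p r : ℝ} (hp : 0 < p) (hr : 0 < r)
    (hπ : ∀ k, 0 ≤ π k) (hrec : ∀ k : ℕ, (k + 1) * π (k + 1) = p * (r + k) * π k)
    {n i : ℕ} (hin : i ≤ n) :
    (∑ j ∈ Icc (i + 1) n, π j) / (p * (r + i)) + (∑ j ∈ range i, π j) / i
      ≤ (∑ j ∈ range (n + 1), π j - π 0) / (p * r) := by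
  set T := ∑ j ∈ Icc (i + 1) n, π j
  set H := ∑ j ∈ range i, π j
  set A := ∑ j ∈ range i, π (j + 1)
  have hpr : 0 < p * r := mul_pos hp hr
  have hsplit : ∑ j ∈ range (n + 1), π j - π 0 = A + T := by
    rw [← sum_range_add_sum_Ico π (by omega : i + 1 ≤ n + 1), sum_range_succ',
      Ico_add_one_right_eq_Icc]
    ring
  have head_mul : p * r * H ≤ i * A := by
    rw [mul_sum, mul_sum]
    refine sum_le_sum fun j hj => ?_
    have hji : (j : ℝ) + 1 ≤ i := by exact_mod_cast mem_range.mp hj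
    calc p * r * π j ≤ p * (r + j) * π j := by
          gcongr
          · exact hπ j
          · exact le_add_of_nonneg_right j.cast_nonneg
      _ = (j + 1) * π (j + 1) := (hrec j).symm
      _ ≤ i * π (j + 1) := by gcongr; exact hπ _
  have tail_div : T / (p * (r + i)) ≤ T / (p * r) := by
    gcongr
    · exact sum_nonneg fun j _ => hπ j
    · exact le_add_of_nonneg_right i.cast_nonneg
  have head_div : H / i ≤ A / (p * r) := by
    rcases (i.cast_nonneg : (0 : ℝ) ≤ i).eq_or_lt with hi | hi
    · rw [← hi, div_zero]
      exact div_nonneg (sum_nonneg fun j _ => hπ _) hpr.le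
    · rw [div_le_div_iff₀ hi hpr]
      linarith
  rw [hsplit, add_div, add_comm (A / _)]
  exact add_le_add tail_div head_div

theorem nbPmf_pos {r p : ℝ} (hr : 0 < r) (hp0 : 0 < p) (hp1 : p < 1) (k : ℕ) :
    0 < nbPmf r p k := by
  unfold nbPmf
  have hΓ : 0 < Real.Gamma (r + k) := Real.Gamma_pos_of_pos (by positivity)
  have hΓr : 0 < Real.Gamma r := Real.Gamma_pos_of_pos hr
  have hq : 0 < (1 - p) ^ r := Real.rpow_pos_of_pos (by linarith) r
  positivity

theorem succ_mul_nbPmf_succ {r : ℝ} (hr : 0 < r) (p : ℝ) (k : ℕ) :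
    ((k : ℝ) + 1) * nbPmf r p (k + 1) = p * (r + k) * nbPmf r p k := by
  have hΓ : Real.Gamma (r + (k + 1 : ℕ)) = (r + k) * Real.Gamma (r + k) := by
    rw [Nat.cast_succ, ← add_assoc, Real.Gamma_add_one (by positivity)]
  have hΓr : Real.Gamma r ≠ 0 := (Real.Gamma_pos_of_pos hr).ne'
  unfold nbPmf
  rw [hΓ, Nat.factorial_succ, pow_succ]
  push_cast
  field_simp

theorem sum_truncNbPmf {r p : ℝ} (hr : 0 < r) (hp0 : 0 < p) (hp1 : p < 1) (n : ℕ) :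
    ∑ j ∈ range (n + 1), truncNbPmf r p n j = 1 := by
  have hS : 0 < ∑ j ∈ range (n + 1), nbPmf r p j :=
    sum_pos (fun j _ => nbPmf_pos hr hp0 hp1 j) nonempty_range_add_one
  simp only [truncNbPmf]
  rw [← sum_div, div_self hS.ne']

theorem truncNbPmf_nonneg {r p : ℝ} (hr : 0 < r) (hp0 : 0 < p) (hp1 : p < 1) (n k : ℕ) :
    0 ≤ truncNbPmf r p n k :=
  div_nonneg (nbPmf_pos hr hp0 hp1 k).le (sum_nonneg fun j _ => (nbPmf_pos hr hp0 hp1 j).le)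

theorem succ_mul_truncNbPmf_succ {r : ℝ} (hr : 0 < r) (p : ℝ) (n k : ℕ) :
    ((k : ℝ) + 1) * truncNbPmf r p n (k + 1) = p * (r + k) * truncNbPmf r p n k := by
  simp only [truncNbPmf, ← mul_div_assoc, succ_mul_nbPmf_succ hr]

theorem truncNb_stein_factor_inequality_general (r p : ℝ) (hr : 0 < r) (hp0 : 0 < p) (hp1 : p < 1)
    (n : ℕ) (i : ℕ) (hin : i ≤ n) :
    (∑ j ∈ Finset.Icc (i + 1) n, truncNbPmf r p n j) / (p * (r + i))
        + (∑ j ∈ Finset.range i, truncNbPmf r p n j) / i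
      ≤ (1 - truncNbPmf r p n 0) / (p * r) := by
  rw [← sum_truncNbPmf hr hp0 hp1 n]
  exact tail_div_add_head_div_le_of_succ_mul_eq hp0 hr (truncNbPmf_nonneg hr hp0 hp1 n)
    (succ_mul_truncNbPmf_succ hr p n) hin

/-- The key inequality in the proof of the Stein factor bound: for `1 ≤ i ≤ n`,
`(π_{i+1} + ⋯ + π_n)/(p(r+i)) + (π_0 + ⋯ + π_{i-1})/i ≤ (1 - π₀)/(p r)`. -/
theorem truncNb_stein_factor_inequality (r p : ℝ) (hr : 0 < r) (hp0 : 0 < p) (hp1 : p < 1)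
    (n : ℕ) (i : ℕ) (hi1 : 1 ≤ i) (hin : i ≤ n) :
    (∑ j ∈ Finset.Icc (i + 1) n, truncNbPmf r p n j) / (p * (r + i))
        + (∑ j ∈ Finset.range i, truncNbPmf r p n j) / i
      ≤ (1 - truncNbPmf r p n 0) / (p * r) :=
  truncNb_stein_factor_inequality_general r p hr hp0 hp1 n i hin
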